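/- Let p be a prime, G a group, ℓ ≥ 0 and k ≥ 1 integers, and let N ≤ G be a subgroup of finite index (G : N) = p^ℓ that is isomorphic as a group to the direct product of k copies of G. Then for every natural number r there exists a subgroup H ≤ G with (G : H) = p^{ℓ·r} such that H is isomorphic to the direct product of (k−1)·r + 1 copies of G. -/

import Mathlib

open Filter Topology

/-- `ngen G` is the minimal number of generators `d(G)` of a group `G`. -/
noncomputable def ngen (G : Type*) [Group G] : ℕ :=
  sInf {n | ∃ S : Finset G, S.card = n ∧ Subgroup.closure (S : Set G) = ⊤}

open scoped commutatorElement in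
/-- `phiP p G` is `Φ_p(G)`, the subgroup of `G` generated by all commutators
and all `p`-th powers. -/
def phiP (p : ℕ) (G : Type*) [Group G] : Subgroup G :=
  Subgroup.normalClosure ({x | ∃ a b : G, x = ⁅a, b⁆} ∪ {x | ∃ g : G, x = g ^ p})

instance phiP_normal (p : ℕ) (G : Type*) [Group G] : (phiP p G).Normal :=
  Subgroup.normalClosure_normal

/-- `dp p G = d_p(G)`, the minimal number of generators of `G/Φ_p(G)`. -/
noncomputable def dp (p : ℕ) (G : Type*) [Group G] : ℕ := ngen (G ⧸ phiP p G)

/-- `subCount G n = s_n(G)`, the number of (finite-index) subgroups of `G`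
of index at most `n`. -/
noncomputable def subCount (G : Type*) [Group G] (n : ℕ) : ℕ :=
  Nat.card {H : Subgroup G // 0 < H.index ∧ H.index ≤ n}

/-- `dpMax p G m = d_p(m)`, the maximum of `d_p(U)` over subgroups `U ≤ G`
of index exactly `p^m`. -/
noncomputable def dpMax (p : ℕ) (G : Type*) [Group G] (m : ℕ) : ℕ :=
  sSup {d | ∃ U : Subgroup G, U.index = p ^ m ∧ d = dp p ↥U}

/-!
If `H ≤ G` is isomorphic to `G × B`, the subgroup `N × B` of `G × B` has index `(G : N)` and is
isomorphic to `Gᵏ × B`; pulled back to `H` it becomes a subgroup of `G` of index `(G : H)·(G : N)`.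
Starting from `H = G` and iterating `r` times, each step trades one factor `G` for `k` factors and
multiplies the index by `p^ℓ`.
-/

namespace MulEquiv

variable (G : Type*) [Group G]

def piFinAdd (a b : ℕ) : ((Fin a → G) × (Fin b → G)) ≃* (Fin (a + b) → G) :=
  (MulEquiv.mk' (Equiv.sumArrowEquivProdArrow _ _ G) fun _ _ => rfl).symm.trans
    (arrowCongr finSumFinEquiv (.refl G))

def piFinSucc (m : ℕ) : (G × (Fin m → G)) ≃* (Fin (m + 1) → G) :=
  MulEquiv.mk' (Fin.consEquiv fun _ => G) fun _ _ => by
    ext i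
    cases i using Fin.cases <;> rfl

end MulEquiv

namespace Subgroup

variable {G : Type*} [Group G]

theorem exists_index_mul_mulEquiv_of_mulEquiv {A : Type*} [Group A] (H : Subgroup G)
    (e : H ≃* A) (K : Subgroup A) :
    ∃ H' : Subgroup G, H'.index = H.index * K.index ∧ Nonempty (H' ≃* K) := by
  set K' : Subgroup H := K.map (e.symm : A →* H)
  refine ⟨K'.map H.subtype, by rw [index_map_subtype, index_map_equiv, mul_comm], ⟨?_⟩⟩
  exact (K'.equivMapOfInjective H.subtype H.subtype_injective).symm.trans
    (e.symm.subgroupMap K).symm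

theorem exists_index_mul_mulEquiv_prod {A B : Type*} [Group A] [Group B] (N H : Subgroup G)
    (eN : N ≃* A) (eH : H ≃* G × B) :
    ∃ H' : Subgroup G, H'.index = H.index * N.index ∧ Nonempty (H' ≃* A × B) := by
  obtain ⟨H', hH', ⟨e⟩⟩ := H.exists_index_mul_mulEquiv_of_mulEquiv eH (N.prod ⊤)
  refine ⟨H', by rw [hH', index_prod, index_top, mul_one], ⟨?_⟩⟩
  exact e.trans ((N.prodEquiv ⊤).trans (eN.prodCongr topEquiv))

theorem exists_index_pow_mulEquiv_pi (N : Subgroup G) {j : ℕ} (eN : N ≃* (Fin (j + 1) → G))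
    (r : ℕ) : ∃ H : Subgroup G, H.index = N.index ^ r ∧ Nonempty (H ≃* (Fin (j * r + 1) → G)) := by
  induction r with
  | zero => exact ⟨⊤, by simp, ⟨topEquiv.trans (MulEquiv.funUnique (Fin 1) G).symm⟩⟩
  | succ r ih =>
    obtain ⟨H, hH, ⟨e⟩⟩ := ih
    obtain ⟨H', hH', ⟨e'⟩⟩ :=
      exists_index_mul_mulEquiv_prod N H eN (e.trans (MulEquiv.piFinSucc G _).symm)
    refine ⟨H', by rw [hH', hH, pow_succ], ⟨?_⟩⟩
    exact e'.trans ((MulEquiv.piFinAdd G _ _).trans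
      (MulEquiv.arrowCongr (finCongr (by ring)) (.refl G)))

end Subgroup

theorem exists_subgroup_iso_many_copies_general
    (p : ℕ) (G : Type*) [Group G]
    (ℓ k : ℕ) (hk : 1 ≤ k)
    (N : Subgroup G) (hNidx : N.index = p ^ ℓ)
    (hNiso : Nonempty (N ≃* (Fin k → G))) (r : ℕ) :
    ∃ H : Subgroup G, H.index = p ^ (ℓ * r) ∧
      Nonempty (H ≃* (Fin ((k - 1) * r + 1) → G)) := by
  obtain ⟨j, rfl⟩ := Nat.exists_eq_add_of_le' hk
  obtain ⟨e⟩ := hNiso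
  obtain ⟨H, hH, hiso⟩ := N.exists_index_pow_mulEquiv_pi e r
  exact ⟨H, by rw [hH, hNidx, pow_mul], by simpa using hiso⟩

theorem exists_subgroup_iso_many_copies
    (p : ℕ) (hp : p.Prime) (G : Type*) [Group G]
    (ℓ k : ℕ) (hk : 1 ≤ k)
    (N : Subgroup G) (hNidx : N.index = p ^ ℓ)
    (hNiso : Nonempty (N ≃* (Fin k → G))) (r : ℕ) :
    ∃ H : Subgroup G, H.index = p ^ (ℓ * r) ∧
      Nonempty (H ≃* (Fin ((k - 1) * r + 1) → G)) :=
  exists_subgroup_iso_many_copies_general p G ℓ k hk N hNidx hNiso r
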